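/- arXiv:2211.13563 — 3 statements merged into one kernel-verified Lean document; each statement's English description precedes it below -/
import Mathlib

section
/- If f is convex of order α (0 ≤ α < 1) on the unit disk with f''(0)=0, then for all z in the unit disk, 1/(1+|z|²)^{1-α} ≤ |f'(z)| ≤ 1/(1-|z|²)^{1-α}. -/
/-!
Write `p(w) = w f''(w) / f'(w)`. Convexity of order `α` says `Re p > -(1 - α)`, so
`ω = p / (p + 2(1 - α))` maps the unit disk into itself; `f''(0) = 0` makes `ω` vanish to second
order at `0`, hence `|ω(w)| ≤ |w|²` by the Schwarz lemma. Solving for `p` and bounding the real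
part of the Möbius image of the disk `|ω| ≤ |w|²` gives
`-2(1 - α) |w|² / (1 + |w|²) ≤ Re p(w) ≤ 2(1 - α) |w|² / (1 - |w|²)`.
Since `d/dt log |f'(t z)| = Re p(t z) / t`, integrating along the radius `[0, z]` yields the
distortion bounds.
-/

open Metric Set Filter Topology

theorem Complex.norm_le_mul_div_sq_of_mapsTo_ball {E : Type*} [NormedAddCommGroup E]
    [NormedSpace ℂ E] {f : ℂ → E} {R₁ R₂ : ℝ} {z : ℂ}
    (hd : DifferentiableOn ℂ f (ball 0 R₁)) (h_maps : MapsTo f (ball 0 R₁) (closedBall 0 R₂))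
    (h0 : f 0 = 0) (h1 : deriv f 0 = 0) (hz : z ∈ ball 0 R₁) :
    ‖f z‖ ≤ R₂ * (‖z‖ / R₁) ^ 2 := by
  have hR₁ : 0 < R₁ := nonempty_ball.1 ⟨z, hz⟩
  have hf' : HasDerivAt f 0 0 :=
    h1 ▸ (hd.differentiableAt (ball_mem_nhds 0 hR₁)).hasDerivAt
  have ho : (f · - f 0) =o[𝓝 0] (fun w ↦ ‖w - 0‖ ^ 1) := by
    simpa using (hasDerivAt_iff_isLittleO.1 hf').norm_right
  simpa [h0] using dist_le_mul_div_pow_of_mapsTo_ball_of_isLittleO hd (h0 ▸ h_maps) ho hz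

theorem Complex.norm_lt_norm_add_two_mul_ofReal {p : ℂ} {β : ℝ} (hβ : 0 < β) (hp : -β < p.re) :
    ‖p‖ < ‖p + 2 * β‖ := by
  rw [← sq_lt_sq₀ (norm_nonneg _) (norm_nonneg _), Complex.sq_norm, Complex.sq_norm,
    Complex.normSq_apply, Complex.normSq_apply]
  simp only [Complex.add_re, Complex.add_im, Complex.mul_re, Complex.mul_im, Complex.ofReal_re,
    Complex.ofReal_im, Complex.re_ofNat, Complex.im_ofNat]
  nlinarith [mul_pos hβ (neg_lt_iff_pos_add.1 hp)]

theorem Complex.re_div_one_sub_mem_Icc {w : ℂ} {s : ℝ} (hws : ‖w‖ ≤ s) (hs : s < 1) :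
    (w / (1 - w)).re ∈ Icc (-(s / (1 + s))) (s / (1 - s)) := by
  have hs0 : 0 ≤ s := (norm_nonneg w).trans hws
  have hsq : w.re ^ 2 + w.im ^ 2 ≤ s ^ 2 := by
    have := pow_le_pow_left₀ (norm_nonneg w) hws 2
    rwa [Complex.sq_norm, Complex.normSq_apply, ← sq, ← sq] at this
  obtain ⟨hre₁, hre₂⟩ := abs_le.1 ((Complex.abs_re_le_norm w).trans hws)
  have hden : 0 < (1 - w.re) ^ 2 + w.im ^ 2 := by nlinarith
  have hre : (w / (1 - w)).re = (w.re - (w.re ^ 2 + w.im ^ 2)) / ((1 - w.re) ^ 2 + w.im ^ 2) := by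
    rw [Complex.div_re, Complex.normSq_apply]
    simp only [Complex.sub_re, Complex.sub_im, Complex.one_re, Complex.one_im]
    ring
  rw [hre]
  constructor
  · rw [neg_le, ← neg_div, div_le_div_iff₀ hden (by linarith)]
    nlinarith [mul_nonneg (sub_nonneg.2 hs.le) (neg_le_iff_add_nonneg.1 hre₁)]
  · rw [div_le_div_iff₀ hden (by linarith)]
    nlinarith [mul_nonneg (sub_nonneg.2 hre₂) (by linarith : (0:ℝ) ≤ 1 - w.re)]

theorem Complex.re_mem_Icc_of_neg_lt_re {p : ℂ → ℂ} {β : ℝ} (hβ : 0 < β)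
    (hp : DifferentiableOn ℂ p (ball 0 1)) (h0 : p 0 = 0) (h1 : deriv p 0 = 0)
    (hre : ∀ w ∈ ball (0 : ℂ) 1, -β < (p w).re) {w : ℂ} (hw : w ∈ ball (0 : ℂ) 1) :
    (p w).re ∈ Icc (-(2 * β * (‖w‖ ^ 2 / (1 + ‖w‖ ^ 2)))) (2 * β * (‖w‖ ^ 2 / (1 - ‖w‖ ^ 2))) := by
  have hne : ∀ w ∈ ball (0 : ℂ) 1, p w + 2 * β ≠ 0 := fun w hw h ↦ by
    simpa [h] using (norm_nonneg _).trans_lt (Complex.norm_lt_norm_add_two_mul_ofReal hβ (hre w hw))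
  set ω : ℂ → ℂ := fun w ↦ p w / (p w + 2 * β)
  have hωd : DifferentiableOn ℂ ω (ball 0 1) := hp.div (hp.add_const _) hne
  have hωmaps : MapsTo ω (ball 0 1) (closedBall 0 1) := fun w hw ↦ by
    rw [mem_closedBall_zero_iff, norm_div, div_le_one (norm_pos_iff.2 (hne w hw))]
    exact (Complex.norm_lt_norm_add_two_mul_ofReal hβ (hre w hw)).le
  have hω0 : ω 0 = 0 := by simp [ω, h0]
  have hω1 : deriv ω 0 = 0 := by
    have hp0 : HasDerivAt p 0 0 :=
      (hp.differentiableAt (ball_mem_nhds 0 one_pos)).hasDerivAt.congr_deriv h1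
    refine (hp0.fun_div (hp0.add_const _) (hne 0 (mem_ball_self one_pos))).deriv.trans ?_
    simp [h0]
  have hωw : ‖ω w‖ ≤ ‖w‖ ^ 2 := by
    simpa using Complex.norm_le_mul_div_sq_of_mapsTo_ball hωd hωmaps hω0 hω1 hw
  have hpω : p w = 2 * β * (ω w / (1 - ω w)) := by
    have hden := hne w hw
    have hβ' : (β : ℂ) ≠ 0 := by exact_mod_cast hβ.ne'
    simp only [ω]
    field_simp
    ring
  have hw2 : ‖w‖ ^ 2 < 1 := by
    simpa using pow_lt_one₀ (norm_nonneg w) (mem_ball_zero_iff.1 hw) two_ne_zero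
  obtain ⟨hlo, hhi⟩ := Complex.re_div_one_sub_mem_Icc hωw hw2
  rw [hpω, show (2 : ℂ) * β = (2 * β : ℝ) by push_cast; rfl, Complex.re_ofReal_mul]
  constructor
  · rw [← mul_neg]; exact mul_le_mul_of_nonneg_left hlo (by positivity)
  · exact mul_le_mul_of_nonneg_left hhi (by positivity)

theorem HasDerivAt.log_norm {G : ℝ → ℂ} {G' : ℂ} {t : ℝ} (hG : HasDerivAt G G' t)
    (h0 : G t ≠ 0) : HasDerivAt (fun s ↦ Real.log ‖G s‖) (G' / G t).re t := by
  have h := (hG.norm_sq.log (by positivity)).const_mul (1 / 2)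
  have hfun : (fun s ↦ Real.log ‖G s‖) = fun s ↦ 1 / 2 * Real.log (‖G s‖ ^ 2) := by
    ext s; rw [Real.log_pow]; push_cast; ring
  rw [hfun]
  refine h.congr_deriv ?_
  rw [Complex.inner, div_eq_mul_inv G', Complex.inv_def, ← mul_assoc, Complex.re_mul_ofReal,
    Complex.normSq_eq_norm_sq]
  field_simp

theorem hasDerivAt_log_norm_comp_ofReal_mul {g : ℂ → ℂ} {z : ℂ} {t : ℝ}
    (hg : DifferentiableAt ℂ g (t * z)) (h0 : g (t * z) ≠ 0) :
    HasDerivAt (fun s : ℝ ↦ Real.log ‖g (s * z)‖) (z * logDeriv g (t * z)).re t := by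
  have hline : HasDerivAt (fun s : ℝ ↦ (s : ℂ) * z) z t := by
    simpa using Complex.ofRealCLM.hasDerivAt.mul_const z
  refine ((hg.hasDerivAt.comp t hline).log_norm h0).congr_deriv ?_
  rw [Function.comp_apply, logDeriv_apply, mul_comm, mul_div_assoc]

theorem sub_le_sub_of_hasDerivAt_le {u U u' U' : ℝ → ℝ} {a b : ℝ} (hab : a ≤ b)
    (hu : ∀ t ∈ Icc a b, HasDerivAt u (u' t) t) (hU : ∀ t ∈ Icc a b, HasDerivAt U (U' t) t)
    (hle : ∀ t ∈ Ioo a b, u' t ≤ U' t) : u b - u a ≤ U b - U a := by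
  have hd : ∀ t ∈ Icc a b, HasDerivAt (fun s ↦ U s - u s) (U' t - u' t) t :=
    fun t ht ↦ (hU t ht).sub (hu t ht)
  have hmono : MonotoneOn (fun s ↦ U s - u s) (Icc a b) := by
    refine monotoneOn_of_deriv_nonneg (convex_Icc a b)
      (fun t ht ↦ (hd t ht).continuousAt.continuousWithinAt) ?_ ?_ <;>
      rw [interior_Icc]
    · exact fun t ht ↦ (hd t (Ioo_subset_Icc_self ht)).differentiableAt.differentiableWithinAt
    · intro t ht
      rw [(hd t (Ioo_subset_Icc_self ht)).deriv, sub_nonneg]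
      exact hle t ht
  have := hmono (left_mem_Icc.2 hab) (right_mem_Icc.2 hab) hab
  linarith

theorem hasDerivAt_neg_mul_log_one_add_mul_sq (β k t : ℝ) (h : 1 + k * t ^ 2 ≠ 0) :
    HasDerivAt (fun s ↦ -β * Real.log (1 + k * s ^ 2))
      (-(2 * β * (k * t / (1 + k * t ^ 2)))) t := by
  have := (((hasDerivAt_pow 2 t).const_mul k).const_add 1).log h |>.const_mul (-β)
  refine this.congr_deriv ?_
  ring

theorem Real.log_one_div_rpow {y : ℝ} (hy : 0 < y) (β : ℝ) :
    Real.log (1 / y ^ β) = -β * Real.log y := by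
  rw [one_div, Real.log_inv, Real.log_rpow hy, neg_mul]

theorem norm_mem_Icc_of_re_mul_logDeriv_mem_Icc {g : ℂ → ℂ} {β : ℝ}
    (hg : DifferentiableOn ℂ g (ball 0 1)) (hg0 : g 0 = 1) (hne : ∀ w ∈ ball (0 : ℂ) 1, g w ≠ 0)
    (hbound : ∀ w ∈ ball (0 : ℂ) 1, (w * logDeriv g w).re ∈
      Icc (-(2 * β * (‖w‖ ^ 2 / (1 + ‖w‖ ^ 2)))) (2 * β * (‖w‖ ^ 2 / (1 - ‖w‖ ^ 2))))
    {z : ℂ} (hz : z ∈ ball (0 : ℂ) 1) :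
    ‖g z‖ ∈ Icc (1 / (1 + ‖z‖ ^ 2) ^ β) (1 / (1 - ‖z‖ ^ 2) ^ β) := by
  have hz2 : ‖z‖ ^ 2 < 1 := by
    simpa using pow_lt_one₀ (norm_nonneg z) (mem_ball_zero_iff.1 hz) two_ne_zero
  have hmem : ∀ t ∈ Icc (0 : ℝ) 1, (t : ℂ) * z ∈ ball (0 : ℂ) 1 := fun t ht ↦ by
    rw [mem_ball_zero_iff, norm_mul, Complex.norm_real, Real.norm_of_nonneg ht.1]
    exact (mul_le_of_le_one_left (norm_nonneg z) ht.2).trans_lt (mem_ball_zero_iff.1 hz)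
  have hu : ∀ t ∈ Icc (0 : ℝ) 1, HasDerivAt (fun s : ℝ ↦ Real.log ‖g (s * z)‖)
      (z * logDeriv g (t * z)).re t := fun t ht ↦
    hasDerivAt_log_norm_comp_ofReal_mul
      (hg.differentiableAt (isOpen_ball.mem_nhds (hmem t ht))) (hne _ (hmem t ht))
  have hradial : ∀ t ∈ Ioo (0 : ℝ) 1, t * (z * logDeriv g (t * z)).re ∈
      Icc (t * -(2 * β * (t * ‖z‖ ^ 2 / (1 + t ^ 2 * ‖z‖ ^ 2))))
        (t * (2 * β * (t * ‖z‖ ^ 2 / (1 - t ^ 2 * ‖z‖ ^ 2)))) := fun t ht ↦ by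
    have h := hbound _ (hmem t (Ioo_subset_Icc_self ht))
    rw [norm_mul, Complex.norm_real, Real.norm_of_nonneg ht.1.le,
      mul_assoc (t : ℂ), Complex.re_ofReal_mul] at h
    constructor <;> [convert h.1 using 1; convert h.2 using 1] <;> ring
  have hq : ∀ t ∈ Icc (0 : ℝ) 1, 0 < 1 + -‖z‖ ^ 2 * t ^ 2 := fun t ht ↦ by
    nlinarith [pow_le_one₀ ht.1 ht.2 (n := 2), sq_nonneg ‖z‖]
  have hupper := sub_le_sub_of_hasDerivAt_le zero_le_one hu
    (fun t ht ↦ hasDerivAt_neg_mul_log_one_add_mul_sq β (-‖z‖ ^ 2) t (hq t ht).ne')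
    (fun t ht ↦ le_of_mul_le_mul_left ((hradial t ht).2.trans_eq (by ring)) ht.1)
  have hlower := sub_le_sub_of_hasDerivAt_le zero_le_one
    (fun t ht ↦ hasDerivAt_neg_mul_log_one_add_mul_sq β (‖z‖ ^ 2) t (by positivity)) hu
    (fun t ht ↦ le_of_mul_le_mul_left ((hradial t ht).1.trans_eq' (by ring)) ht.1)
  simp only [Complex.ofReal_one, one_mul, Complex.ofReal_zero, zero_mul, hg0, norm_one,
    Real.log_one, sub_zero, one_pow, mul_one, neg_mul, ne_eq, OfNat.ofNat_ne_zero,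
    not_false_eq_true, zero_pow, mul_zero, add_zero] at hupper hlower
  have hgz : 0 < ‖g z‖ := norm_pos_iff.2 (hne z hz)
  constructor
  · rw [← Real.log_le_log_iff (by positivity) hgz, Real.log_one_div_rpow (by positivity)]
    linarith
  · rw [← Real.log_le_log_iff hgz (by have := sub_pos.2 hz2; positivity),
      Real.log_one_div_rpow (sub_pos.2 hz2), sub_eq_add_neg]
    linarith

theorem convex_order_alpha_zero_second_deriv_distortion_general
    (f : ℂ → ℂ) (α : ℝ) (hα1 : α < 1)
    (hf : DifferentiableOn ℂ f (Metric.ball 0 1))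
    (hf' : ∀ z ∈ Metric.ball (0:ℂ) 1, deriv f z ≠ 0)
    (hf1 : deriv f 0 = 1) (hf2 : deriv (deriv f) 0 = 0)
    (hconv : ∀ z ∈ Metric.ball (0:ℂ) 1,
      α < (1 + z * (deriv (deriv f) z / deriv f z)).re) :
    ∀ z ∈ Metric.ball (0:ℂ) 1,
      1 / (1 + ‖z‖ ^ 2) ^ (1 - α) ≤ ‖deriv f z‖ ∧
      ‖deriv f z‖ ≤ 1 / (1 - ‖z‖ ^ 2) ^ (1 - α) := by
  have hfa : AnalyticOnNhd ℂ f (ball 0 1) := hf.analyticOnNhd isOpen_ball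
  have hlog : DifferentiableOn ℂ (logDeriv (deriv f)) (ball 0 1) :=
    hfa.deriv.deriv.differentiableOn.div hfa.deriv.differentiableOn hf'
  have hlog0 : HasDerivAt (fun w ↦ w * logDeriv (deriv f) w) 0 0 := by
    refine ((hasDerivAt_id' (0 : ℂ)).fun_mul
      (hlog.differentiableAt (ball_mem_nhds 0 one_pos)).hasDerivAt).congr_deriv ?_
    simp [logDeriv_apply, hf1, hf2]
  have hre : ∀ w ∈ ball (0 : ℂ) 1, -(1 - α) < (w * logDeriv (deriv f) w).re := fun w hw ↦ by
    have := hconv w hw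
    rw [Complex.add_re, Complex.one_re] at this
    rw [logDeriv_apply]
    linarith
  have hbound := fun w hw ↦ Complex.re_mem_Icc_of_neg_lt_re (sub_pos.2 hα1)
    (differentiableOn_id.mul hlog) (by simp) hlog0.deriv hre (w := w) hw
  exact fun z hz ↦ norm_mem_Icc_of_re_mul_logDeriv_mem_Icc hfa.deriv.differentiableOn hf1 hf'
    hbound hz

theorem convex_order_alpha_zero_second_deriv_distortion
    (f : ℂ → ℂ) (α : ℝ) (hα0 : 0 ≤ α) (hα1 : α < 1)
    (hf : DifferentiableOn ℂ f (Metric.ball 0 1))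
    (hf' : ∀ z ∈ Metric.ball (0:ℂ) 1, deriv f z ≠ 0)
    (hf0 : f 0 = 0) (hf1 : deriv f 0 = 1) (hf2 : deriv (deriv f) 0 = 0)
    (hconv : ∀ z ∈ Metric.ball (0:ℂ) 1,
      α < (1 + z * (deriv (deriv f) z / deriv f z)).re) :
    ∀ z ∈ Metric.ball (0:ℂ) 1,
      1 / (1 + ‖z‖ ^ 2) ^ (1 - α) ≤ ‖deriv f z‖ ∧
      ‖deriv f z‖ ≤ 1 / (1 - ‖z‖ ^ 2) ^ (1 - α) :=
  convex_order_alpha_zero_second_deriv_distortion_general f α hα1 hf hf' hf1 hf2 hconv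
end

section
/- If f is a univalent convex mapping of order α (0 ≤ α < 1) on the unit disk with f''(0)=0, then for all z in the unit disk, |f(z)| ≥ ∫₀^{|z|} (1+t²)^{-(1-α)} dt. -/
/-!
Put `q = z f''/f'`. Since `Re (1 + q) > α` and `q` has a double zero at `0` (as `f''(0) = 0`),
the Cayley transform `q / (q + 2(1 - α))` is a self-map of the disk with a double zero at `0`;
Schwarz's lemma bounds it by `|z|²`, whence `Re q(z) ≥ -2(1 - α)|z|²/(1 + |z|²)`. Along each ray
`|f'(tz)| (1 + t²|z|²)^(1-α)` then has nonnegative derivative, so `|f'(z)| ≥ (1 + |z|²)^(-(1-α))`.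
That `f'` has no zeros is the same ray argument: at the first zero `t₀` on a ray,
`|f'(tz)| t^(1-α)` would be nondecreasing on `[t₀/2, t₀]` and yet vanish at `t₀`.
Finally, the segment `[0, f(z)]` lies in the convex image; its preimage `γ` runs from `0` to `z`,
and `M(r) = ∫₀^r (1 + t²)^(-(1-α)) dt` satisfies `d/ds M(|γ|) ≤ |f'(γ)| |γ'| = |f(z)|`.
-/

open Complex Metric Set Function
open scoped RealInnerProductSpace

theorem HasDerivAt.norm_of_ne_zero {E : Type*} [NormedAddCommGroup E] [InnerProductSpace ℝ E]
    {F : ℝ → E} {v : E} {t : ℝ} (hF : HasDerivAt F v t) (h0 : F t ≠ 0) :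
    HasDerivAt (fun s => ‖F s‖) (⟪F t, v⟫ / ‖F t‖) t := by
  have h := hF.norm_sq.sqrt (by positivity)
  simp only [Real.sqrt_sq (norm_nonneg _)] at h
  convert h using 1
  field_simp

theorem HasDerivAt.comp_ofReal_mul {g : ℂ → ℂ} {g' ζ : ℂ} {t : ℝ}
    (hg : HasDerivAt g g' (t * ζ)) : HasDerivAt (fun s : ℝ => g (s * ζ)) (ζ * g') t := by
  simpa [mul_comm] using (hg.comp (t : ℂ) ((hasDerivAt_id (t : ℂ)).mul_const ζ)).comp_ofReal

theorem StarConvex.ofReal_mul_mem {s : Set ℂ} {ζ : ℂ} {t : ℝ} (hs : StarConvex ℝ 0 s)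
    (hζ : ζ ∈ s) (ht : t ∈ Icc (0 : ℝ) 1) : (t : ℂ) * ζ ∈ s := by
  simpa [← real_smul] using hs.smul_mem hζ ht.1 ht.2

theorem ofReal_mul_mem_ball_zero_one {ζ : ℂ} {t : ℝ} (hζ : ζ ∈ ball (0 : ℂ) 1)
    (ht : t ∈ Icc (0 : ℝ) 1) : (t : ℂ) * ζ ∈ ball (0 : ℂ) 1 :=
  (convex_ball (0 : ℂ) 1).starConvex (mem_ball_self one_pos) |>.ofReal_mul_mem hζ ht

theorem hasDerivAt_norm_comp_ofReal_mul {g : ℂ → ℂ} {ζ : ℂ} {t : ℝ}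
    (hg : DifferentiableAt ℂ g (t * ζ)) (h0 : g (t * ζ) ≠ 0) :
    HasDerivAt (fun s : ℝ => ‖g (s * ζ)‖) (‖g (t * ζ)‖ * (ζ * logDeriv g (t * ζ)).re) t := by
  convert hg.hasDerivAt.comp_ofReal_mul.norm_of_ne_zero h0 using 1
  rw [Complex.inner, logDeriv_apply]
  set c := g (t * ζ)
  have hc : ‖c‖ ≠ 0 := norm_ne_zero_iff.mpr h0
  have hconj : ζ * deriv g (t * ζ) * (starRingEnd ℂ) c
      = ((‖c‖ ^ 2 : ℝ) : ℂ) * (ζ * (deriv g (t * ζ) / c)) := by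
    rw [ofReal_pow, ← mul_conj']
    field_simp
  rw [hconj, re_ofReal_mul]
  field_simp

theorem monotoneOn_norm_comp_ofReal_mul_mul {g : ℂ → ℂ} {ζ : ℂ} {h h' : ℝ → ℝ} {a b : ℝ}
    (hg : ∀ t ∈ Icc a b, DifferentiableAt ℂ g (t * ζ)) (hg0 : ∀ t ∈ Ioo a b, g (t * ζ) ≠ 0)
    (hh : ContinuousOn h (Icc a b)) (hh' : ∀ t ∈ Ioo a b, HasDerivAt h (h' t) t)
    (hnonneg : ∀ t ∈ Ioo a b, 0 ≤ (ζ * logDeriv g (t * ζ)).re * h t + h' t) :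
    MonotoneOn (fun t : ℝ => ‖g (t * ζ)‖ * h t) (Icc a b) := by
  have hcont : ContinuousOn (fun t : ℝ => ‖g (t * ζ)‖) (Icc a b) := fun t ht =>
    (hg t ht).hasDerivAt.comp_ofReal_mul.continuousAt.norm.continuousWithinAt
  refine monotoneOn_of_hasDerivWithinAt_nonneg (convex_Icc a b) (hcont.mul hh)
    (f' := fun t => ‖g (t * ζ)‖ * ((ζ * logDeriv g (t * ζ)).re * h t + h' t))
    (fun t ht => ?_) (fun t ht => ?_) <;> rw [interior_Icc] at ht
  · exact ((hasDerivAt_norm_comp_ofReal_mul (hg t (Ioo_subset_Icc_self ht)) (hg0 t ht)).fun_mul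
      (hh' t ht)).hasDerivWithinAt.congr_deriv (by ring)
  · exact mul_nonneg (norm_nonneg _) (hnonneg t ht)

theorem ne_zero_of_lt_re_mul_logDeriv {g : ℂ → ℂ} {β : ℝ}
    (hg : DifferentiableOn ℂ g (ball 0 1)) (hg0 : g 0 ≠ 0)
    (hre : ∀ z ∈ ball (0 : ℂ) 1, β < (z * logDeriv g z).re) :
    ∀ ζ ∈ ball (0 : ℂ) 1, g ζ ≠ 0 := by
  intro ζ hζ hζ0
  have hdiff : ∀ t ∈ Icc (0 : ℝ) 1, DifferentiableAt ℂ g (t * ζ) := fun t ht =>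
    hg.differentiableAt (isOpen_ball.mem_nhds (ofReal_mul_mem_ball_zero_one hζ ht))
  -- `logDeriv g` is `0` at the zeros of `g`, so `hre` is only informative before the first zero.
  obtain ⟨T, ⟨⟨hT0, hT1⟩, hgT⟩, hTmin⟩ :
      ∃ T, IsLeast {t ∈ Icc (0 : ℝ) 1 | g (t * ζ) = 0} T := by
    have hclosed : IsClosed {t ∈ Icc (0 : ℝ) 1 | g (t * ζ) = 0} :=
      ContinuousOn.preimage_isClosed_of_isClosed
        (fun t ht => (hdiff t ht).hasDerivAt.comp_ofReal_mul.continuousAt.continuousWithinAt)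
        isClosed_Icc isClosed_singleton
    exact (isCompact_Icc.of_isClosed_subset hclosed (sep_subset _ _)).exists_isLeast
      ⟨1, ⟨⟨zero_le_one, le_rfl⟩, by simpa using hζ0⟩⟩
  have hTpos : 0 < T := hT0.lt_of_ne (by rintro rfl; exact hg0 (by simpa using hgT))
  have hmono : MonotoneOn (fun t : ℝ => ‖g (t * ζ)‖ * t ^ (-β)) (Icc (T / 2) T) := by
    refine monotoneOn_norm_comp_ofReal_mul_mul (h' := fun t => -β * t ^ (-β - 1))
      (fun t ht => hdiff t ⟨by linarith [ht.1], ht.2.trans hT1⟩)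
      (fun t ht hgt => ht.2.not_ge (hTmin ⟨⟨by linarith [ht.1], ht.2.le.trans hT1⟩, hgt⟩))
      (fun t ht =>
        (Real.continuousAt_rpow_const t _ (Or.inl (by linarith [ht.1]))).continuousWithinAt)
      (fun t ht => Real.hasDerivAt_rpow_const (Or.inl (by linarith [ht.1])))
      (fun t ht => ?_)
    have ht0 : 0 < t := by linarith [ht.1]
    have hlt := hre _ (ofReal_mul_mem_ball_zero_one hζ ⟨ht0.le, ht.2.le.trans hT1⟩)
    rw [mul_assoc, re_ofReal_mul] at hlt
    have hpow : t ^ (-β) = t * t ^ (-β - 1) := by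
      rw [Real.rpow_sub_one ht0.ne']
      field_simp
    rw [hpow]
    nlinarith [Real.rpow_pos_of_pos ht0 (-β - 1)]
  have hle := hmono ⟨le_rfl, by linarith⟩ ⟨by linarith, le_rfl⟩ (by linarith)
  simp only [hgT, norm_zero, zero_mul] at hle
  have hThalf : g ((T / 2 : ℝ) * ζ) ≠ 0 := fun h =>
    (half_lt_self hTpos).not_ge (hTmin ⟨⟨by linarith, by linarith⟩, h⟩)
  exact hle.not_gt (mul_pos (norm_pos_iff.mpr hThalf) (Real.rpow_pos_of_pos (half_pos hTpos) _))

theorem one_add_sq_rpow_neg_le_norm_of_neg_le_re_mul_logDeriv {g : ℂ → ℂ} {a : ℝ}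
    (hg : DifferentiableOn ℂ g (ball 0 1)) (hg0 : g 0 = 1)
    (hne : ∀ z ∈ ball (0 : ℂ) 1, g z ≠ 0)
    (hre : ∀ z ∈ ball (0 : ℂ) 1, -(2 * a * ‖z‖ ^ 2 / (1 + ‖z‖ ^ 2)) ≤ (z * logDeriv g z).re) :
    ∀ ζ ∈ ball (0 : ℂ) 1, (1 + ‖ζ‖ ^ 2) ^ (-a) ≤ ‖g ζ‖ := by
  intro ζ hζ
  set ρ := ‖ζ‖ ^ 2
  have hu : ∀ t : ℝ, 0 < 1 + ρ * t ^ 2 := fun t => by positivity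
  have hmono : MonotoneOn (fun t : ℝ => ‖g (t * ζ)‖ * (1 + ρ * t ^ 2) ^ a) (Icc 0 1) := by
    refine monotoneOn_norm_comp_ofReal_mul_mul
      (h' := fun t => 2 * a * ρ * t * (1 + ρ * t ^ 2) ^ (a - 1))
      (fun t ht => hg.differentiableAt (isOpen_ball.mem_nhds (ofReal_mul_mem_ball_zero_one hζ ht)))
      (fun t ht => hne _ (ofReal_mul_mem_ball_zero_one hζ (Ioo_subset_Icc_self ht)))
      (ContinuousOn.rpow_const (by fun_prop) fun t _ => Or.inl (hu t).ne')
      (fun t ht => ?_) (fun t ht => ?_)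
    · convert ((hasDerivAt_pow 2 t).const_mul ρ |>.const_add 1).rpow_const
        (p := a) (Or.inl (hu t).ne') using 1
      push_cast
      ring
    · have ht0 := ht.1
      have hle := hre _ (ofReal_mul_mem_ball_zero_one hζ (Ioo_subset_Icc_self ht))
      have hnorm : ‖(t : ℂ) * ζ‖ ^ 2 = ρ * t ^ 2 := by
        rw [norm_mul, norm_real, Real.norm_of_nonneg ht0.le, mul_pow, mul_comm]
      rw [mul_assoc (t : ℂ), re_ofReal_mul, hnorm] at hle
      have hR : -(2 * a * ρ * t / (1 + ρ * t ^ 2)) ≤ (ζ * logDeriv g (t * ζ)).re := by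
        refine le_of_mul_le_mul_left (le_trans (le_of_eq ?_) hle) ht0
        ring
      have hcancel : -(2 * a * ρ * t / (1 + ρ * t ^ 2)) * (1 + ρ * t ^ 2) ^ a
          + 2 * a * ρ * t * (1 + ρ * t ^ 2) ^ (a - 1) = 0 := by
        rw [Real.rpow_sub_one (hu t).ne' a]
        ring
      nlinarith [mul_le_mul_of_nonneg_right hR (Real.rpow_pos_of_pos (hu t) a).le]
  have hle := hmono ⟨le_rfl, zero_le_one⟩ ⟨zero_le_one, le_rfl⟩ zero_le_one
  simp only [ofReal_zero, zero_mul, hg0, norm_one, ofReal_one, one_mul, one_pow, mul_one,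
    ne_eq, OfNat.ofNat_ne_zero, not_false_eq_true, zero_pow, mul_zero, add_zero,
    Real.one_rpow] at hle
  rwa [Real.rpow_neg (by positivity), inv_le_iff_one_le_mul₀ (by positivity)]

theorem norm_le_norm_sq_of_mapsTo_ball {w : ℂ → ℂ} {z : ℂ}
    (hd : DifferentiableOn ℂ w (ball 0 1)) (hmaps : MapsTo w (ball 0 1) (closedBall 0 1))
    (h0 : w 0 = 0) (h1 : deriv w 0 = 0) (hz : z ∈ ball (0 : ℂ) 1) : ‖w z‖ ≤ ‖z‖ ^ 2 := by
  have hd1 : DifferentiableOn ℂ (dslope w 0) (ball 0 1) :=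
    (differentiableOn_dslope (ball_mem_nhds _ one_pos)).mpr hd
  have hmaps1 : MapsTo (dslope w 0) (ball 0 1) (closedBall 0 1) := fun ζ hζ => by
    simpa using Complex.norm_dslope_le_div_of_mapsTo_ball hd (by rwa [h0]) hζ
  have hle := Complex.norm_le_norm_of_mapsTo_ball hd1 hmaps1 (by rw [dslope_same, h1])
    (mem_ball_zero_iff.mp hz)
  have hw := sub_smul_dslope w 0 z
  rw [sub_zero, h0, sub_zero, smul_eq_mul] at hw
  rw [← hw, norm_mul, sq]
  exact mul_le_mul_of_nonneg_left hle (norm_nonneg z)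

theorem norm_sub_one_lt_norm_add_of_lt_re {p : ℂ} {α : ℝ} (hα : α < 1) (hp : α < p.re) :
    ‖p - 1‖ < ‖p + (1 - 2 * α : ℝ)‖ := by
  rw [← sq_lt_sq₀ (norm_nonneg _) (norm_nonneg _), Complex.sq_norm, Complex.sq_norm,
    normSq_apply, normSq_apply]
  simp only [sub_re, sub_im, add_re, add_im, one_re, one_im, ofReal_re, ofReal_im]
  nlinarith

theorem neg_div_one_add_le_re_div_one_sub {w : ℂ} {r : ℝ} (hw : ‖w‖ ≤ r) (hr : r < 1) :
    -(r / (1 + r)) ≤ (w / (1 - w)).re := by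
  have hsq : w.re ^ 2 + w.im ^ 2 ≤ r ^ 2 := by
    nlinarith [Complex.sq_norm w, normSq_apply w, norm_nonneg w]
  have hre := abs_le.mp ((abs_re_le_norm w).trans hw)
  have hden : 0 < (1 - w.re) ^ 2 + w.im ^ 2 := by nlinarith
  have hquot : (w / (1 - w)).re
      = (w.re - (w.re ^ 2 + w.im ^ 2)) / ((1 - w.re) ^ 2 + w.im ^ 2) := by
    rw [div_re, normSq_apply, ← add_div]
    simp only [sub_re, sub_im, one_re, one_im]
    ring
  rw [hquot, neg_le, ← neg_div, div_le_div_iff₀ hden (by linarith [hre.1])]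
  -- `(x - |w|²)(1 + r) + r |1 - w|² = (1 - r)(x + r) + (r² - |w|²)` with `x = Re w`
  nlinarith [mul_nonneg (sub_nonneg.mpr hr.le) (neg_le_iff_add_nonneg.mp hre.1)]

theorem neg_le_re_sub_one_of_lt_re {p : ℂ → ℂ} {α : ℝ} (hα : α < 1)
    (hp : DifferentiableOn ℂ p (ball 0 1)) (hp0 : p 0 = 1) (hp1 : deriv p 0 = 0)
    (hre : ∀ z ∈ ball (0 : ℂ) 1, α < (p z).re) :
    ∀ z ∈ ball (0 : ℂ) 1, -(2 * (1 - α) * ‖z‖ ^ 2 / (1 + ‖z‖ ^ 2)) ≤ (p z - 1).re := by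
  have hlt z (hz : z ∈ ball (0 : ℂ) 1) := norm_sub_one_lt_norm_add_of_lt_re hα (hre z hz)
  have hden z (hz : z ∈ ball (0 : ℂ) 1) : p z + (1 - 2 * α : ℝ) ≠ 0 :=
    norm_pos_iff.mp ((norm_nonneg _).trans_lt (hlt z hz))
  set w : ℂ → ℂ := fun z => (p z - 1) / (p z + (1 - 2 * α : ℝ))
  have hw0 : w 0 = 0 := by simp [w, hp0]
  have hwd : DifferentiableOn ℂ w (ball 0 1) := (hp.sub_const 1).div (hp.add_const _) hden
  have hmaps : MapsTo w (ball 0 1) (closedBall 0 1) := fun z hz => by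
    rw [mem_closedBall_zero_iff, norm_div]
    exact (div_lt_one ((norm_nonneg _).trans_lt (hlt z hz))).mpr (hlt z hz) |>.le
  have hwd0 : deriv w 0 = 0 := by
    have h0 : (0 : ℂ) ∈ ball (0 : ℂ) 1 := mem_ball_self one_pos
    have hpd := (hp.differentiableAt (isOpen_ball.mem_nhds h0)).hasDerivAt
    rw [((hpd.sub_const 1).fun_div (hpd.add_const _) (hden 0 h0)).deriv, hp1]
    simp
  intro z hz
  have hwz := norm_le_norm_sq_of_mapsTo_ball hwd hmaps hw0 hwd0 hz
  have hz2 : ‖z‖ ^ 2 < 1 := by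
    have := mem_ball_zero_iff.mp hz
    nlinarith [norm_nonneg z]
  have hcayley : p z - 1 = (2 * (1 - α) : ℝ) * (w z / (1 - w z)) := by
    have hD := hden z hz
    have h1w : 1 - w z = (2 * (1 - α) : ℝ) / (p z + (1 - 2 * α : ℝ)) := by
      rw [eq_div_iff hD, sub_mul, div_mul_cancel₀ _ hD]
      push_cast
      ring
    have hα' : ((2 * (1 - α) : ℝ) : ℂ) ≠ 0 := by exact_mod_cast (by linarith : 2 * (1 - α) ≠ 0)
    rw [h1w, div_div_div_cancel_right₀ hD, mul_div_cancel₀ _ hα']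
  rw [hcayley, re_ofReal_mul]
  calc -(2 * (1 - α) * ‖z‖ ^ 2 / (1 + ‖z‖ ^ 2))
      = 2 * (1 - α) * -(‖z‖ ^ 2 / (1 + ‖z‖ ^ 2)) := by ring
    _ ≤ _ := mul_le_mul_of_nonneg_left (neg_div_one_add_le_re_div_one_sub hwz hz2) (by linarith)

theorem hasDerivAt_invFunOn_ofReal_mul {f : ℂ → ℂ} {U : Set ℂ} {w x : ℂ} {s : ℝ}
    (hU : IsOpen U) (hf : DifferentiableOn ℂ f U) (hinj : InjOn f U) (hx : x ∈ U)
    (hfx : f x = s * w) (hne : deriv f x ≠ 0) :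
    HasDerivAt (fun r : ℝ => invFunOn f U (r * w)) (w / deriv f x) s := by
  have hinv : HasStrictDerivAt (invFunOn f U) (deriv f x)⁻¹ (f x) :=
    (hf.analyticOnNhd hU x hx).hasStrictDerivAt.to_local_left_inverse hne
      (Filter.eventually_of_mem (hU.mem_nhds hx) fun y hy => hinj.leftInvOn_invFunOn hy)
  rw [hfx] at hinv
  simpa [div_eq_mul_inv] using hinv.hasDerivAt.comp_ofReal_mul

theorem exists_hasDerivAt_preimage_segment {f : ℂ → ℂ} {z : ℂ}
    (hf : DifferentiableOn ℂ f (ball 0 1)) (hinj : InjOn f (ball 0 1))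
    (hcvx : Convex ℝ (f '' ball 0 1)) (hf0 : f 0 = 0)
    (hne : ∀ ζ ∈ ball (0 : ℂ) 1, deriv f ζ ≠ 0) (hz : z ∈ ball (0 : ℂ) 1) :
    ∃ γ : ℝ → ℂ, γ 0 = 0 ∧ γ 1 = z ∧ ∀ s ∈ Icc (0 : ℝ) 1, γ s ∈ ball (0 : ℂ) 1 ∧
      f (γ s) = s * f z ∧ HasDerivAt γ (f z / deriv f (γ s)) s := by
  have h0 : (0 : ℂ) ∈ ball (0 : ℂ) 1 := mem_ball_self one_pos
  have hseg : ∀ s ∈ Icc (0 : ℝ) 1, (s : ℂ) * f z ∈ f '' ball 0 1 := fun s hs =>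
    (hcvx.starConvex ⟨0, h0, hf0⟩).ofReal_mul_mem (mem_image_of_mem f hz) hs
  refine ⟨fun s => invFunOn f (ball 0 1) (s * f z), ?_, ?_, fun s hs => ?_⟩
  · refine hinj (invFunOn_mem (hseg 0 ⟨le_rfl, zero_le_one⟩)) h0 ?_
    simpa [hf0] using invFunOn_eq (hseg 0 ⟨le_rfl, zero_le_one⟩)
  · simpa using hinj.leftInvOn_invFunOn hz
  · have hmem := invFunOn_mem (hseg s hs)
    have hfγ := invFunOn_eq (hseg s hs)
    exact ⟨hmem, hfγ, hasDerivAt_invFunOn_ofReal_mul isOpen_ball hf hinj hmem hfγ (hne _ hmem)⟩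

theorem intervalIntegral_le_norm_of_le_norm_deriv {f : ℂ → ℂ} {m : ℝ → ℝ} {z : ℂ}
    (hf : DifferentiableOn ℂ f (ball 0 1)) (hinj : InjOn f (ball 0 1))
    (hcvx : Convex ℝ (f '' ball 0 1)) (hf0 : f 0 = 0) (hm : Continuous m)
    (hm_pos : ∀ t, 0 < m t) (hlow : ∀ ζ ∈ ball (0 : ℂ) 1, m ‖ζ‖ ≤ ‖deriv f ζ‖)
    (hz : z ∈ ball (0 : ℂ) 1) :
    ∫ t in (0 : ℝ)..‖z‖, m t ≤ ‖f z‖ := by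
  rcases eq_or_ne z 0 with rfl | hz0
  · simp [hf0]
  have hne : ∀ ζ ∈ ball (0 : ℂ) 1, deriv f ζ ≠ 0 := fun ζ hζ =>
    norm_pos_iff.mp ((hm_pos _).trans_le (hlow ζ hζ))
  have hfz : f z ≠ 0 := fun h => hz0 (hinj hz (mem_ball_self one_pos) (h.trans hf0.symm))
  obtain ⟨γ, hγ0, hγ1, hγ⟩ := exists_hasDerivAt_preimage_segment hf hinj hcvx hf0 hne hz
  have hγne : ∀ s ∈ Ioo (0 : ℝ) 1, γ s ≠ 0 := fun s hs h => by
    have := (hγ s (Ioo_subset_Icc_self hs)).2.1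
    rw [h, hf0, zero_eq_mul] at this
    exact this.elim (fun h' => hs.1.ne' (by exact_mod_cast h')) hfz
  set M : ℝ → ℝ := fun r => ∫ t in (0 : ℝ)..r, m t
  have hM : ∀ r, HasDerivAt M (m r) r := fun r => (hm.integral_hasStrictDerivAt 0 r).hasDerivAt
  have hφ : ∀ s ∈ Ioo (0 : ℝ) 1, HasDerivAt (fun s => M ‖γ s‖)
      (m ‖γ s‖ * (⟪γ s, f z / deriv f (γ s)⟫ / ‖γ s‖)) s := fun s hs =>
    (hM _).comp s ((hγ s (Ioo_subset_Icc_self hs)).2.2.norm_of_ne_zero (hγne s hs))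
  have hφ_le : ∀ s ∈ Ioo (0 : ℝ) 1,
      m ‖γ s‖ * (⟪γ s, f z / deriv f (γ s)⟫ / ‖γ s‖) ≤ ‖f z‖ := by
    intro s hs
    obtain ⟨hmem, -, -⟩ := hγ s (Ioo_subset_Icc_self hs)
    have hinner : ⟪γ s, f z / deriv f (γ s)⟫ / ‖γ s‖ ≤ ‖f z / deriv f (γ s)‖ :=
      (div_le_iff₀' (norm_pos_iff.mpr (hγne s hs))).mpr (real_inner_le_norm _ _)
    calc m ‖γ s‖ * (⟪γ s, f z / deriv f (γ s)⟫ / ‖γ s‖)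
        ≤ m ‖γ s‖ * ‖f z / deriv f (γ s)‖ := mul_le_mul_of_nonneg_left hinner (hm_pos _).le
      _ ≤ ‖deriv f (γ s)‖ * ‖f z / deriv f (γ s)‖ :=
          mul_le_mul_of_nonneg_right (hlow _ hmem) (norm_nonneg _)
      _ = ‖f z‖ := by rw [norm_div, mul_div_cancel₀ _ (norm_ne_zero_iff.mpr (hne _ hmem))]
  have hmvt := (convex_Icc (0 : ℝ) 1).image_sub_le_mul_sub_of_deriv_le (f := fun s => M ‖γ s‖)
    (fun s hs => ((hM _).continuousAt.comp (hγ s hs).2.2.continuousAt.norm).continuousWithinAt)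
    (fun s hs => by
      rw [interior_Icc] at hs
      exact (hφ s hs).differentiableAt.differentiableWithinAt)
    (fun s hs => by
      rw [interior_Icc] at hs
      rw [(hφ s hs).deriv]
      exact hφ_le s hs)
    0 ⟨le_rfl, zero_le_one⟩ 1 ⟨zero_le_one, le_rfl⟩ zero_le_one
  simpa [M, hγ0, hγ1] using hmvt

theorem convex_order_alpha_zero_second_deriv_growth_lower_general
    (f : ℂ → ℂ) (α : ℝ) (hα1 : α < 1)
    (hf : DifferentiableOn ℂ f (Metric.ball 0 1))
    (hinj : Set.InjOn f (Metric.ball 0 1))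
    (hcvx : Convex ℝ (f '' Metric.ball 0 1))
    (hf0 : f 0 = 0) (hf1 : deriv f 0 = 1) (hf2 : deriv (deriv f) 0 = 0)
    (hconv : ∀ z ∈ Metric.ball (0:ℂ) 1,
      α < (1 + z * (deriv (deriv f) z / deriv f z)).re) :
    ∀ z ∈ Metric.ball (0:ℂ) 1,
      (∫ t in (0:ℝ)..‖z‖, (1 + t ^ 2) ^ (-(1 - α))) ≤ ‖f z‖ := by
  have hfa := hf.analyticOnNhd isOpen_ball
  have hf' : DifferentiableOn ℂ (deriv f) (ball 0 1) := hfa.deriv.differentiableOn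
  have hne : ∀ z ∈ ball (0 : ℂ) 1, deriv f z ≠ 0 :=
    ne_zero_of_lt_re_mul_logDeriv (β := α - 1) hf' (by simp [hf1]) fun z hz => by
      have := hconv z hz
      rw [add_re, one_re] at this
      rw [logDeriv_apply]
      linarith
  have hq : DifferentiableOn ℂ (logDeriv (deriv f)) (ball 0 1) :=
    hfa.deriv.deriv.differentiableOn.div hf' hne
  have hp1 : deriv (fun z => 1 + z * logDeriv (deriv f) z) 0 = 0 := by
    have hqd := (hq.differentiableAt (ball_mem_nhds 0 one_pos)).hasDerivAt
    rw [(((hasDerivAt_id' 0).fun_mul hqd).const_add 1).deriv]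
    simp [logDeriv_apply, hf2]
  have hschwarz := neg_le_re_sub_one_of_lt_re hα1 ((differentiableOn_id.mul hq).const_add 1)
    (by simp) hp1 hconv
  have hlow := one_add_sq_rpow_neg_le_norm_of_neg_le_re_mul_logDeriv hf' hf1 hne fun z hz => by
    simpa using hschwarz z hz
  exact fun z hz => intervalIntegral_le_norm_of_le_norm_deriv hf hinj hcvx hf0
    (Continuous.rpow_const (by fun_prop) fun t => Or.inl (by positivity)) (fun t => by positivity)
    hlow hz

theorem convex_order_alpha_zero_second_deriv_growth_lower
    (f : ℂ → ℂ) (α : ℝ) (hα0 : 0 ≤ α) (hα1 : α < 1)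
    (hf : DifferentiableOn ℂ f (Metric.ball 0 1))
    (hinj : Set.InjOn f (Metric.ball 0 1))
    (hcvx : Convex ℝ (f '' Metric.ball 0 1))
    (hf0 : f 0 = 0) (hf1 : deriv f 0 = 1) (hf2 : deriv (deriv f) 0 = 0)
    (hconv : ∀ z ∈ Metric.ball (0:ℂ) 1,
      α < (1 + z * (deriv (deriv f) z / deriv f z)).re) :
    ∀ z ∈ Metric.ball (0:ℂ) 1,
      (∫ t in (0:ℝ)..‖z‖, (1 + t ^ 2) ^ (-(1 - α))) ≤ ‖f z‖ :=
  convex_order_alpha_zero_second_deriv_growth_lower_general f α hα1 hf hinj hcvx hf0 hf1 hf2 hconv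
end

section
/- Let f be convex of order α (0 ≤ α < 1) on the unit disk, normalized f(0)=0, f'(0)=1, and set p = |f''(0)|/(2(1-α)), assuming p < 1. Then for all z in the unit disk, (1-|z|²)²·|Sf(z)| ≤ 2(1-α)·(1 + α·(1+p)/(1-p)). -/
/-!
Put `w = f''/f'` and `φ = w / (2(1 - α) + z w)`. Then `z φ` is the Schwarz function `ω` of
the Carathéodory function `(1 + z w - α)/(1 - α) = (1 + ω)/(1 - ω)`, so the Schwarz lemma and the
maximum principle (with `|φ(0)| = p < 1`) make `φ` a self-map of the disk. A direct computation gives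
`Sf · (1 - z φ)² = 2(1 - α)(φ' + α φ²)`. The Schwarz–Pick lemma bounds `|φ'(z)|` by
`(1 - |φ(z)|²)/(1 - |z|²)` and `|φ(z)|` by `(p + |z|)/(1 + p|z|)`; with `r = |z|`, `t = |φ(z)|`
and `|1 - z φ| ≥ 1 - r t`, the estimate reduces to `(1 - t²)(1 - r²) ≤ (1 - r t)²` and
`(p + r)² ≤ (1 + p)/(1 - p)`.
-/

open Complex Metric Set ComplexConjugate

noncomputable def diskAut (b u : ℂ) : ℂ := (u - b) / (1 - conj b * u)

section DiskAut

variable {b u : ℂ}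

theorem sq_norm_one_sub_conj_mul_sub_sq_norm_sub (b u : ℂ) :
    ‖1 - conj b * u‖ ^ 2 - ‖u - b‖ ^ 2 = (1 - ‖b‖ ^ 2) * (1 - ‖u‖ ^ 2) := by
  simp only [Complex.sq_norm, normSq_apply, sub_re, sub_im, mul_re, mul_im, conj_re, conj_im,
    one_re, one_im]
  ring

theorem norm_sub_lt_norm_one_sub_conj_mul (hb : ‖b‖ < 1) (hu : ‖u‖ < 1) :
    ‖u - b‖ < ‖1 - conj b * u‖ := by
  have hid := sq_norm_one_sub_conj_mul_sub_sq_norm_sub b u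
  have hpos : 0 < (1 - ‖b‖ ^ 2) * (1 - ‖u‖ ^ 2) := by
    apply mul_pos <;> nlinarith [norm_nonneg b, norm_nonneg u]
  exact lt_of_pow_lt_pow_left₀ 2 (norm_nonneg _) (by linarith)

theorem one_sub_conj_mul_ne_zero (hb : ‖b‖ < 1) (hu : ‖u‖ < 1) : 1 - conj b * u ≠ 0 :=
  norm_pos_iff.mp ((norm_nonneg _).trans_lt (norm_sub_lt_norm_one_sub_conj_mul hb hu))

theorem mapsTo_diskAut (hb : ‖b‖ < 1) : MapsTo (diskAut b) (ball 0 1) (ball 0 1) := by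
  intro u hu
  rw [mem_ball_zero_iff] at hu ⊢
  rw [diskAut, norm_div, div_lt_one ((norm_nonneg _).trans_lt
    (norm_sub_lt_norm_one_sub_conj_mul hb hu))]
  exact norm_sub_lt_norm_one_sub_conj_mul hb hu

@[simp] theorem diskAut_self (b : ℂ) : diskAut b b = 0 := by simp [diskAut]

@[simp] theorem diskAut_neg_zero (a : ℂ) : diskAut (-a) 0 = a := by simp [diskAut]

theorem hasDerivAt_diskAut (h : 1 - conj b * u ≠ 0) :
    HasDerivAt (diskAut b) ((1 - conj b * b) / (1 - conj b * u) ^ 2) u := by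
  refine (((hasDerivAt_id' u).sub_const b).fun_div
    (((hasDerivAt_id' u).const_mul (conj b)).const_sub 1) h).congr_deriv ?_
  ring

theorem differentiableOn_diskAut (hb : ‖b‖ < 1) : DifferentiableOn ℂ (diskAut b) (ball 0 1) :=
  fun _u hu => (hasDerivAt_diskAut (one_sub_conj_mul_ne_zero hb
    (mem_ball_zero_iff.mp hu))).differentiableAt.differentiableWithinAt

theorem norm_one_sub_conj_mul_self (b : ℂ) : ‖1 - conj b * b‖ = |1 - ‖b‖ ^ 2| := by
  rw [mul_comm, mul_conj, ← Complex.sq_norm, ← ofReal_one, ← ofReal_sub, norm_real,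
    Real.norm_eq_abs]

end DiskAut

section SchwarzPick

variable {g : ℂ → ℂ} {a : ℂ}

theorem norm_diskAut_le_of_mapsTo_ball (hg : DifferentiableOn ℂ g (ball 0 1))
    (hmaps : MapsTo g (ball 0 1) (ball 0 1)) (ha : a ∈ ball (0 : ℂ) 1) :
    ‖diskAut (g 0) (g a)‖ ≤ ‖a‖ := by
  have hb : ‖g 0‖ < 1 := mem_ball_zero_iff.mp (hmaps (mem_ball_self one_pos))
  exact Complex.norm_le_norm_of_mapsTo_ball (f := diskAut (g 0) ∘ g)
    ((differentiableOn_diskAut hb).comp hg hmaps)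
    (((mapsTo_diskAut hb).comp hmaps).mono_right ball_subset_closedBall)
    (diskAut_self _) (mem_ball_zero_iff.mp ha)

theorem mul_one_add_mul_le_add_of_one_sub_sq_mul_le {q t r : ℝ} (hq0 : 0 ≤ q) (hq : q < 1)
    (ht : t < 1) (hr0 : 0 ≤ r)
    (h : (1 - r ^ 2) * (1 - q * t) ^ 2 ≤ (1 - q ^ 2) * (1 - t ^ 2)) :
    t * (1 + q * r) ≤ q + r := by
  by_contra! hlt
  have hqt : q < t := by
    by_contra! htq
    nlinarith [mul_le_mul_of_nonneg_right htq (by positivity : (0 : ℝ) ≤ 1 + q * r),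
      mul_nonneg hr0 (by nlinarith : (0 : ℝ) ≤ 1 - q ^ 2)]
  have hfactor : (1 - q ^ 2) * (1 - t ^ 2) - (1 - r ^ 2) * (1 - q * t) ^ 2
      = -(((1 + q * r) * t - (q + r)) * ((1 - q * r) * t - (q - r))) := by ring
  have hpos : 0 < ((1 + q * r) * t - (q + r)) * ((1 - q * r) * t - (q - r)) := by
    apply mul_pos <;> nlinarith [mul_nonneg hr0 (by nlinarith : (0 : ℝ) ≤ 1 - q * t)]
  linarith

theorem norm_le_of_norm_diskAut_le {b u : ℂ} {r : ℝ} (hb : ‖b‖ < 1) (hu : ‖u‖ < 1)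
    (h : ‖diskAut b u‖ ≤ r) : ‖u‖ * (1 + ‖b‖ * r) ≤ ‖b‖ + r := by
  have hr0 : 0 ≤ r := (norm_nonneg _).trans h
  have hd : 0 < ‖1 - conj b * u‖ := norm_pos_iff.mpr (one_sub_conj_mul_ne_zero hb hu)
  rw [diskAut, norm_div, div_le_iff₀ hd] at h
  have hd_ge : 1 - ‖b‖ * ‖u‖ ≤ ‖1 - conj b * u‖ := by
    simpa using norm_sub_norm_le (1 : ℂ) (conj b * u)
  have hqt : 0 ≤ 1 - ‖b‖ * ‖u‖ := by nlinarith [norm_nonneg b, norm_nonneg u]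
  refine mul_one_add_mul_le_add_of_one_sub_sq_mul_le (norm_nonneg b) hb hu hr0 ?_
  rcases le_total r 1 with hr1 | hr1
  · rw [← sq_norm_one_sub_conj_mul_sub_sq_norm_sub]
    nlinarith [mul_le_mul_of_nonneg_left (pow_le_pow_left₀ hqt hd_ge 2)
      (by nlinarith : (0 : ℝ) ≤ 1 - r ^ 2), pow_le_pow_left₀ (norm_nonneg _) h 2]
  · have : 0 ≤ (1 - ‖b‖ ^ 2) * (1 - ‖u‖ ^ 2) := by
      apply mul_nonneg <;> nlinarith [norm_nonneg b, norm_nonneg u]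
    nlinarith [mul_nonneg (by nlinarith : (0 : ℝ) ≤ r ^ 2 - 1) (sq_nonneg (1 - ‖b‖ * ‖u‖))]

theorem norm_mul_one_add_le_of_mapsTo_ball (hg : DifferentiableOn ℂ g (ball 0 1))
    (hmaps : MapsTo g (ball 0 1) (ball 0 1)) (ha : a ∈ ball (0 : ℂ) 1) :
    ‖g a‖ * (1 + ‖g 0‖ * ‖a‖) ≤ ‖g 0‖ + ‖a‖ :=
  norm_le_of_norm_diskAut_le (mem_ball_zero_iff.mp (hmaps (mem_ball_self one_pos)))
    (mem_ball_zero_iff.mp (hmaps ha))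
    (norm_diskAut_le_of_mapsTo_ball hg hmaps ha)

theorem norm_deriv_mul_le_of_mapsTo_ball (hg : DifferentiableOn ℂ g (ball 0 1))
    (hmaps : MapsTo g (ball 0 1) (ball 0 1)) (ha : a ∈ ball (0 : ℂ) 1) :
    ‖deriv g a‖ * (1 - ‖a‖ ^ 2) ≤ 1 - ‖g a‖ ^ 2 := by
  have hb : ‖g a‖ < 1 := mem_ball_zero_iff.mp (hmaps ha)
  have ha' : ‖-a‖ < 1 := by rwa [norm_neg, ← mem_ball_zero_iff]
  have hσ := mapsTo_diskAut ha'
  -- `diskAut (g a) ∘ g ∘ diskAut (-a)` fixes `0`, so Schwarz bounds its derivative there.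
  have hschwarz := Complex.norm_deriv_le_one_of_mapsTo_ball
    (f := diskAut (g a) ∘ g ∘ diskAut (-a))
    ((differentiableOn_diskAut hb).comp (hg.comp (differentiableOn_diskAut ha') hσ)
      (hmaps.comp hσ))
    (by simpa using ((mapsTo_diskAut hb).comp (hmaps.comp hσ)).mono_right ball_subset_closedBall)
    one_pos
  have hchain := (hasDerivAt_diskAut (one_sub_conj_mul_ne_zero hb hb)).comp_of_eq 0
    (((hg.differentiableAt (isOpen_ball.mem_nhds ha)).hasDerivAt).comp_of_eq 0
      (hasDerivAt_diskAut (u := 0) (by simp)) (diskAut_neg_zero a).symm)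
    (by simp)
  rw [hchain.deriv] at hschwarz
  have hb2 : 0 < 1 - ‖g a‖ ^ 2 := by nlinarith [norm_nonneg (g a)]
  have ha2 : 0 ≤ 1 - ‖a‖ ^ 2 := by
    nlinarith [norm_nonneg a, mem_ball_zero_iff.mp ha]
  simp only [map_neg, neg_mul_neg, mul_zero, sub_zero, one_pow, div_one, norm_mul, norm_div,
    norm_pow, norm_one_sub_conj_mul_self, abs_of_pos hb2, abs_of_nonneg ha2] at hschwarz
  rwa [pow_two (1 - _), div_mul_cancel_left₀ hb2.ne', inv_mul_le_iff₀ hb2, mul_one] at hschwarz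

theorem mapsTo_ball_of_mapsTo_id_mul {ψ : ℂ → ℂ} (hψ : DifferentiableOn ℂ ψ (ball 0 1))
    (hmaps : MapsTo (fun z => z * ψ z) (ball 0 1) (ball 0 1)) (h0 : ‖ψ 0‖ < 1) :
    MapsTo ψ (ball 0 1) (ball 0 1) := by
  have hle : ∀ z ∈ ball (0 : ℂ) 1, ‖ψ z‖ ≤ 1 := by
    intro z hz
    rcases eq_or_ne z 0 with rfl | hz0
    · exact h0.le
    have hschwarz := Complex.norm_le_norm_of_mapsTo_ball (f := fun z => z * ψ z)
      (differentiableOn_id.mul hψ) (hmaps.mono_right ball_subset_closedBall) (by simp)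
      (mem_ball_zero_iff.mp hz)
    rw [norm_mul] at hschwarz
    exact le_of_mul_le_mul_left (by simpa using hschwarz) (norm_pos_iff.mpr hz0)
  intro z hz
  rw [mem_ball_zero_iff]
  refine (hle z hz).lt_of_ne fun hz1 => h0.ne ?_
  have hconst := Complex.eqOn_of_isPreconnected_of_isMaxOn_norm
    (convex_ball (0 : ℂ) 1).isPreconnected isOpen_ball hψ hz
    (fun y hy => by simpa [hz1] using hle y hy) (mem_ball_self one_pos)
  simpa [hz1] using congrArg norm hconst

section Schwarzian

variable {𝕜 : Type*} [NontriviallyNormedField 𝕜]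

noncomputable def preSchwarzian (f : 𝕜 → 𝕜) (z : 𝕜) : 𝕜 := deriv (deriv f) z / deriv f z

noncomputable def schwarzian (f : 𝕜 → 𝕜) (z : 𝕜) : 𝕜 :=
  deriv (deriv (deriv f)) z / deriv f z - 3 / 2 * (deriv (deriv f) z / deriv f z) ^ 2

theorem hasDerivAt_preSchwarzian [CharZero 𝕜] {f : 𝕜 → 𝕜} {z : 𝕜}
    (h₁ : DifferentiableAt 𝕜 (deriv f) z) (h₂ : DifferentiableAt 𝕜 (deriv (deriv f)) z)
    (hf' : deriv f z ≠ 0) :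
    HasDerivAt (preSchwarzian f) (schwarzian f z + preSchwarzian f z ^ 2 / 2) z := by
  refine (h₂.hasDerivAt.div h₁.hasDerivAt hf').congr_deriv ?_
  simp only [schwarzian, preSchwarzian]
  field_simp
  ring

end Schwarzian

noncomputable def schwarzQuotient (α : ℝ) (w : ℂ → ℂ) (z : ℂ) : ℂ :=
  w z / (2 * (1 - α) + z * w z)

section SchwarzQuotient

variable {α : ℝ} {w : ℂ → ℂ}

theorem norm_lt_norm_two_mul_one_sub_add (hα : α < 1) {x : ℂ} (hx : α - 1 < x.re) :
    ‖x‖ < ‖2 * (1 - (α : ℂ)) + x‖ := by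
  refine lt_of_pow_lt_pow_left₀ 2 (norm_nonneg _) ?_
  simp only [Complex.sq_norm, normSq_apply, add_re, add_im, mul_re, mul_im, sub_re, sub_im,
    one_re, one_im, ofReal_re, ofReal_im, re_ofNat, im_ofNat]
  nlinarith

theorem two_mul_one_sub_add_ne_zero (hα : α < 1) {x : ℂ} (hx : α - 1 < x.re) :
    2 * (1 - (α : ℂ)) + x ≠ 0 :=
  norm_pos_iff.mp ((norm_nonneg x).trans_lt (norm_lt_norm_two_mul_one_sub_add hα hx))

theorem norm_schwarzQuotient_zero (hα : α ≤ 1) :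
    ‖schwarzQuotient α w 0‖ = ‖w 0‖ / (2 * (1 - α)) := by
  rw [schwarzQuotient, zero_mul, add_zero, norm_div, norm_mul, ← ofReal_one, ← ofReal_sub,
    norm_real, Real.norm_of_nonneg (by linarith), RCLike.norm_ofNat]

theorem mapsTo_id_mul_schwarzQuotient (hα : α < 1)
    (hw : ∀ x ∈ ball (0 : ℂ) 1, α - 1 < (x * w x).re) :
    MapsTo (fun x => x * schwarzQuotient α w x) (ball 0 1) (ball 0 1) := by
  intro x hx
  have hlt := norm_lt_norm_two_mul_one_sub_add hα (hw x hx)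
  simp only [mem_ball_zero_iff, schwarzQuotient]
  rw [mul_div_assoc', norm_div, div_lt_one ((norm_nonneg _).trans_lt hlt)]
  exact hlt

theorem hasDerivAt_schwarzQuotient {w' z : ℂ} (hw : HasDerivAt w w' z)
    (hd : 2 * (1 - (α : ℂ)) + z * w z ≠ 0) :
    HasDerivAt (schwarzQuotient α w)
      ((2 * (1 - α) * w' - w z ^ 2) / (2 * (1 - α) + z * w z) ^ 2) z := by
  refine (hw.fun_div (((hasDerivAt_id' z).fun_mul hw).const_add _) hd).congr_deriv ?_
  ring

theorem differentiableOn_schwarzQuotient (hα : α < 1)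
    (hw : DifferentiableOn ℂ w (ball 0 1)) (hre : ∀ x ∈ ball (0 : ℂ) 1, α - 1 < (x * w x).re) :
    DifferentiableOn ℂ (schwarzQuotient α w) (ball 0 1) :=
  hw.div ((differentiableOn_id.mul hw).const_add _) fun x hx =>
    two_mul_one_sub_add_ne_zero hα (hre x hx)

theorem sub_sq_div_two_mul_one_sub_mul_div_sq {c a z w₀ w' : ℂ} (hc : c = 2 * (1 - a))
    (hd : c + z * w₀ ≠ 0) :
    (w' - w₀ ^ 2 / 2) * (1 - z * (w₀ / (c + z * w₀))) ^ 2
      = c * ((c * w' - w₀ ^ 2) / (c + z * w₀) ^ 2 + a * (w₀ / (c + z * w₀)) ^ 2) := by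
  have h1 : 1 - z * (w₀ / (c + z * w₀)) = c / (c + z * w₀) := by field_simp; ring
  rw [h1]
  field_simp
  subst hc
  ring

end SchwarzQuotient

theorem norm_mul_one_sub_norm_mul_sq_le {S z φ φ' c a : ℂ} (hzφ : ‖z‖ * ‖φ‖ ≤ 1)
    (h : S * (1 - z * φ) ^ 2 = c * (φ' + a * φ ^ 2)) :
    ‖S‖ * (1 - ‖z‖ * ‖φ‖) ^ 2 ≤ ‖c‖ * (‖φ'‖ + ‖a‖ * ‖φ‖ ^ 2) := by
  have hlow : 1 - ‖z‖ * ‖φ‖ ≤ ‖1 - z * φ‖ := by simpa using norm_sub_norm_le (1 : ℂ) (z * φ)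
  calc ‖S‖ * (1 - ‖z‖ * ‖φ‖) ^ 2 ≤ ‖S‖ * ‖1 - z * φ‖ ^ 2 := by gcongr
    _ = ‖c‖ * ‖φ' + a * φ ^ 2‖ := by rw [← norm_pow, ← norm_mul, h, norm_mul]
    _ ≤ ‖c‖ * (‖φ'‖ + ‖a‖ * ‖φ‖ ^ 2) := by
        gcongr
        exact (norm_add_le _ _).trans_eq (by rw [norm_mul, norm_pow])

theorem norm_mul_one_sub_sq_le_of_hasDerivAt {α : ℝ} (hα0 : 0 ≤ α) (hα1 : α < 1)
    {w : ℂ → ℂ} {S z : ℂ} (hw : HasDerivAt w (S + w z ^ 2 / 2) z)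
    (hre : α - 1 < (z * w z).re) (hzφ : ‖z‖ * ‖schwarzQuotient α w z‖ ≤ 1) :
    ‖S‖ * (1 - ‖z‖ * ‖schwarzQuotient α w z‖) ^ 2
      ≤ 2 * (1 - α) * (‖deriv (schwarzQuotient α w) z‖ + α * ‖schwarzQuotient α w z‖ ^ 2) := by
  have hd := two_mul_one_sub_add_ne_zero hα1 hre
  have hid := sub_sq_div_two_mul_one_sub_mul_div_sq (w' := S + w z ^ 2 / 2) (a := α) rfl hd
  rw [add_sub_cancel_right] at hid
  have hc : ‖2 * (1 - (α : ℂ))‖ = 2 * (1 - α) := by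
    rw [← ofReal_one, ← ofReal_sub, ← ofReal_ofNat, ← ofReal_mul, norm_real,
      Real.norm_of_nonneg (by linarith)]
  have ha : ‖(α : ℂ)‖ = α := by rw [norm_real, Real.norm_of_nonneg hα0]
  have h := norm_mul_one_sub_norm_mul_sq_le (φ := schwarzQuotient α w z) hzφ hid
  rwa [hc, ha, ← (hasDerivAt_schwarzQuotient hw hd).deriv] at h

theorem one_sub_sq_sq_mul_le {α c p r t D S : ℝ} (hα : 0 ≤ α) (hc : 0 ≤ c) (hp0 : 0 ≤ p)
    (hp1 : p < 1) (hr0 : 0 ≤ r) (hr1 : r < 1) (ht0 : 0 ≤ t) (ht1 : t < 1)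
    (hD : D * (1 - r ^ 2) ≤ 1 - t ^ 2) (ht : t * (1 + p * r) ≤ p + r)
    (hS : S * (1 - r * t) ^ 2 ≤ c * (D + α * t ^ 2)) :
    (1 - r ^ 2) ^ 2 * S ≤ c * (1 + α * ((1 + p) / (1 - p))) := by
  have hr2 : 0 ≤ 1 - r ^ 2 := by nlinarith
  have hrt : 0 < 1 - r * t := by nlinarith
  have hK : (p + r) ^ 2 ≤ (1 + p) / (1 - p) := by
    rw [le_div_iff₀ (by linarith)]
    nlinarith [mul_le_mul_of_nonneg_right (pow_le_pow_left₀ (by linarith) (by linarith :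
      p + r ≤ 1 + p) 2) (by linarith : (0 : ℝ) ≤ 1 - p),
      mul_nonneg (by linarith : (0 : ℝ) ≤ 1 + p) (sq_nonneg p)]
  have hDpart : D * (1 - r ^ 2) ^ 2 ≤ (1 - r * t) ^ 2 := by
    nlinarith [mul_le_mul_of_nonneg_right hD hr2, sq_nonneg (r - t)]
  have htpart : t ^ 2 * (1 - r ^ 2) ^ 2 ≤ (1 + p) / (1 - p) * (1 - r * t) ^ 2 := by
    have h := pow_le_pow_left₀ (mul_nonneg ht0 hr2)
      (by nlinarith : t * (1 - r ^ 2) ≤ (p + r) * (1 - r * t)) 2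
    nlinarith [mul_le_mul_of_nonneg_right hK (sq_nonneg (1 - r * t))]
  refine le_of_mul_le_mul_right ?_ (pow_pos hrt 2)
  calc (1 - r ^ 2) ^ 2 * S * (1 - r * t) ^ 2 ≤ (1 - r ^ 2) ^ 2 * (c * (D + α * t ^ 2)) := by
        rw [mul_assoc]; gcongr
    _ = c * (D * (1 - r ^ 2) ^ 2 + α * (t ^ 2 * (1 - r ^ 2) ^ 2)) := by ring
    _ ≤ c * ((1 - r * t) ^ 2 + α * ((1 + p) / (1 - p) * (1 - r * t) ^ 2)) := by gcongr
    _ = c * (1 + α * ((1 + p) / (1 - p))) * (1 - r * t) ^ 2 := by ring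

theorem convex_order_alpha_schwarzian_bound_general_general
    (f : ℂ → ℂ) (α : ℝ) (hα0 : 0 ≤ α) (hα1 : α < 1)
    (hf : DifferentiableOn ℂ f (Metric.ball 0 1))
    (hf' : ∀ z ∈ Metric.ball (0:ℂ) 1, deriv f z ≠ 0)
    (hf1 : deriv f 0 = 1)
    (hconv : ∀ z ∈ Metric.ball (0:ℂ) 1,
      α < (1 + z * (deriv (deriv f) z / deriv f z)).re)
    (p : ℝ) (hp : p = ‖deriv (deriv f) 0‖ / (2 * (1 - α))) (hp1 : p < 1) :
    ∀ z ∈ Metric.ball (0:ℂ) 1,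
      (1 - ‖z‖ ^ 2) ^ 2 *
        ‖deriv (deriv (deriv f)) z / deriv f z
          - 3 / 2 * (deriv (deriv f) z / deriv f z) ^ 2‖
        ≤ 2 * (1 - α) * (1 + α * ((1 + p) / (1 - p))) := by
  intro z hz
  set w := preSchwarzian f
  set φ := schwarzQuotient α w
  have hre : ∀ x ∈ ball (0 : ℂ) 1, α - 1 < (x * w x).re := fun x hx => by
    have h := hconv x hx
    rw [add_re, one_re] at h
    exact sub_lt_iff_lt_add'.mpr h
  have hw : ∀ x ∈ ball (0 : ℂ) 1, HasDerivAt w (schwarzian f x + w x ^ 2 / 2) x :=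
    have hfa := hf.analyticOnNhd isOpen_ball
    fun x hx => hasDerivAt_preSchwarzian (hfa.deriv x hx).differentiableAt
      (hfa.deriv.deriv x hx).differentiableAt (hf' x hx)
  have hφ_diff : DifferentiableOn ℂ φ (ball 0 1) := differentiableOn_schwarzQuotient hα1
    (fun x hx => (hw x hx).differentiableAt.differentiableWithinAt) hre
  have hφ0 : ‖φ 0‖ = p := by
    rw [norm_schwarzQuotient_zero hα1.le, hp]
    simp [w, preSchwarzian, hf1]
  have hφ_maps : MapsTo φ (ball 0 1) (ball 0 1) :=
    mapsTo_ball_of_mapsTo_id_mul hφ_diff (mapsTo_id_mul_schwarzQuotient hα1 hre) (hφ0 ▸ hp1)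
  have hz1 : ‖z‖ < 1 := mem_ball_zero_iff.mp hz
  have hφz : ‖φ z‖ < 1 := mem_ball_zero_iff.mp (hφ_maps hz)
  exact one_sub_sq_sq_mul_le hα0 (by linarith) (hφ0 ▸ norm_nonneg _) hp1 (norm_nonneg z) hz1
    (norm_nonneg _) hφz (norm_deriv_mul_le_of_mapsTo_ball hφ_diff hφ_maps hz)
    (hφ0 ▸ norm_mul_one_add_le_of_mapsTo_ball hφ_diff hφ_maps hz)
    (norm_mul_one_sub_sq_le_of_hasDerivAt hα0 hα1 (hw z hz) (hre z hz)
      (mul_le_one₀ hz1.le (norm_nonneg _) hφz.le))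

theorem convex_order_alpha_schwarzian_bound_general
    (f : ℂ → ℂ) (α : ℝ) (hα0 : 0 ≤ α) (hα1 : α < 1)
    (hf : DifferentiableOn ℂ f (Metric.ball 0 1))
    (hf' : ∀ z ∈ Metric.ball (0:ℂ) 1, deriv f z ≠ 0)
    (hf0 : f 0 = 0) (hf1 : deriv f 0 = 1)
    (hconv : ∀ z ∈ Metric.ball (0:ℂ) 1,
      α < (1 + z * (deriv (deriv f) z / deriv f z)).re)
    (p : ℝ) (hp : p = ‖deriv (deriv f) 0‖ / (2 * (1 - α))) (hp1 : p < 1) :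
    ∀ z ∈ Metric.ball (0:ℂ) 1,
      (1 - ‖z‖ ^ 2) ^ 2 *
        ‖deriv (deriv (deriv f)) z / deriv f z
          - 3 / 2 * (deriv (deriv f) z / deriv f z) ^ 2‖
        ≤ 2 * (1 - α) * (1 + α * ((1 + p) / (1 - p))) :=
  convex_order_alpha_schwarzian_bound_general_general f α hα0 hα1 hf hf' hf1 hconv p hp hp1
end SchwarzPick
end
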